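/- Let d ≥ 1 be an integer, L ≥ 0, μ > 0, ε′ ≥ 0. Let f : ℝ^d → ℝ be L-smooth, bounded above with f* = sup f, and satisfy the (μ, ε′)-relaxed weak gradient domination condition. Let θ, u, g ∈ ℝ^d with u ≠ 0, let γ > 0, and set θ⁺ = θ + γ·u/‖u‖. Then f* − f(θ⁺) ≤ (1 − √(2μ)·γ/3)·(f* − f(θ)) + (8γ/3)·‖u − g‖ + (L·γ²)/2 + (ε′·γ)/3 + (4γ/3)·‖g − ∇f(θ)‖. -/

import Mathlib

/-!
By the descent lemma for an `L`-smooth function, the step `θ⁺ = θ + γ u / ‖u‖` gains at least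
`γ ⟪∇f θ, u / ‖u‖⟫ - L γ² / 2`. For any `u`, `⟪w, u / ‖u‖⟫ ≥ ‖u‖ - ‖u - w‖ ≥ ‖w‖ - 2 ‖u - w‖`
and `⟪w, u / ‖u‖⟫ ≥ -‖w‖`; the convex combination with weights `2/3, 1/3` gives
`⟪w, u / ‖u‖⟫ ≥ ‖w‖ / 3 - (4/3) ‖u - w‖`. Splitting `‖u - ∇f θ‖ ≤ ‖u - g‖ + ‖g - ∇f θ‖` and
bounding `‖∇f θ‖` below by gradient domination gives the contraction.
-/

open InnerProductSpace

section Descent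

variable {E : Type*} [NormedAddCommGroup E] [NormedSpace ℝ E]

theorem add_fderiv_sub_le_of_lipschitz_fderiv {f : E → ℝ} {f' : E → E →L[ℝ] ℝ} {L : ℝ}
    (hf : ∀ x, HasFDerivAt f (f' x) x) (hlip : ∀ x y, ‖f' x - f' y‖ ≤ L * ‖x - y‖)
    (x v : E) : f x + f' x v - L / 2 * ‖v‖ ^ 2 ≤ f (x + v) := by
  let ψ : ℝ → ℝ := fun t => f (x + t • v) - t * f' x v + L * ‖v‖ ^ 2 / 2 * t ^ 2
  have hψ : ∀ t : ℝ, HasDerivAt ψ (f' (x + t • v) v - f' x v + L * ‖v‖ ^ 2 * t) t := by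
    intro t
    have hline : HasDerivAt (fun t : ℝ => x + t • v) v t := by
      simpa using ((hasDerivAt_id t).smul_const v).const_add x
    exact ((((hf _).comp_hasDerivAt t hline).sub (hasDerivAt_mul_const (f' x v))).add
      ((hasDerivAt_pow 2 t).const_mul (L * ‖v‖ ^ 2 / 2))).congr_deriv (by push_cast; ring)
  have hmono : MonotoneOn ψ (Set.Ici 0) := by
    refine monotoneOn_of_hasDerivWithinAt_nonneg (convex_Ici 0)
      (fun t _ => (hψ t).continuousAt.continuousWithinAt) (fun t _ => (hψ t).hasDerivWithinAt) ?_
    intro t ht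
    rw [interior_Ici, Set.mem_Ioi] at ht
    have hgap : |(f' (x + t • v) - f' x) v| ≤ L * (t * ‖v‖) * ‖v‖ := by
      refine ((f' (x + t • v) - f' x).le_opNorm v).trans
        (mul_le_mul_of_nonneg_right ?_ (norm_nonneg v))
      simpa [norm_smul, abs_of_pos ht] using hlip (x + t • v) x
    rw [sub_apply] at hgap
    nlinarith [(abs_le.mp hgap).1]
  have h01 := hmono (Set.mem_Ici.mpr le_rfl) (Set.mem_Ici.mpr zero_le_one) zero_le_one
  simp only [ψ, zero_smul, add_zero, zero_mul, sub_zero, one_smul, one_mul, one_pow] at h01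
  linarith

end Descent

section InnerProduct

variable {E : Type*} [NormedAddCommGroup E] [InnerProductSpace ℝ E]

theorem add_inner_gradient_sub_le_of_lipschitz_gradient [CompleteSpace E] {f : E → ℝ} {L : ℝ}
    (hf : Differentiable ℝ f) (hlip : ∀ x y, ‖gradient f x - gradient f y‖ ≤ L * ‖x - y‖)
    (x v : E) : f x + ⟪gradient f x, v⟫_ℝ - L / 2 * ‖v‖ ^ 2 ≤ f (x + v) := by
  have h := add_fderiv_sub_le_of_lipschitz_fderiv (fun x => (hf x).hasFDerivAt) (L := L)
    (fun x y => by
      rw [← toDual_gradient, ← toDual_gradient, ← map_sub, LinearIsometryEquiv.norm_map]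
      exact hlip x y) x v
  rwa [← inner_gradient_left] at h

theorem norm_div_three_sub_le_inner_inv_norm_smul (w u : E) :
    ‖w‖ / 3 - 4 / 3 * ‖u - w‖ ≤ ⟪w, ‖u‖⁻¹ • u⟫_ℝ := by
  rcases eq_or_ne u 0 with rfl | hu
  · simp only [zero_sub, norm_neg, norm_zero, inv_zero, zero_smul, inner_zero_right]
    linarith [norm_nonneg w]
  have hu' : 0 < ‖u‖ := norm_pos_iff.mpr hu
  have hnear : ‖w‖ - 2 * ‖u - w‖ ≤ ⟪w, ‖u‖⁻¹ • u⟫_ℝ := by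
    have h : ⟪u - w, u⟫_ℝ ≤ ‖u - w‖ * ‖u‖ := real_inner_le_norm _ _
    have hw : ‖w‖ - ‖u‖ ≤ ‖u - w‖ := by simpa [norm_sub_rev] using norm_sub_norm_le w u
    rw [inner_sub_left, real_inner_self_eq_norm_sq] at h
    rw [real_inner_smul_right, le_inv_mul_iff₀ hu']
    linarith [mul_le_mul_of_nonneg_left hw hu'.le]
  have hfar : -‖w‖ ≤ ⟪w, ‖u‖⁻¹ • u⟫_ℝ := by
    have hunit : ‖‖u‖⁻¹ • u‖ = 1 := norm_smul_inv_norm (𝕜 := ℝ) hu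
    have h := neg_le_of_abs_le (abs_real_inner_le_norm w (‖u‖⁻¹ • u))
    rwa [hunit, mul_one] at h
  linarith

end InnerProduct

theorem stmt_2
    (d : ℕ) (L : ℝ) (μ : ℝ)
    (ε' : ℝ)
    (f : EuclideanSpace ℝ (Fin d) → ℝ)
    (hdiff : Differentiable ℝ f)
    (hlip : ∀ x y, ‖gradient f x - gradient f y‖ ≤ L * ‖x - y‖)
    (fstar : ℝ)
    (hgd : ∀ x, ε' + ‖gradient f x‖ ≥ Real.sqrt (2 * μ) * (fstar - f x))
    (θ u g : EuclideanSpace ℝ (Fin d)) (hu : u ≠ 0)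
    (γ : ℝ) (hγ : 0 < γ) :
    fstar - f (θ + (γ / ‖u‖) • u) ≤
      (1 - Real.sqrt (2 * μ) * γ / 3) * (fstar - f θ) + (8 * γ / 3) * ‖u - g‖
        + L * γ ^ 2 / 2 + ε' * γ / 3 + (4 * γ / 3) * ‖g - gradient f θ‖ := by
  set w := gradient f θ
  have hstep : (γ / ‖u‖) • u = γ • (‖u‖⁻¹ • u) := by rw [smul_smul, div_eq_mul_inv]
  have hnorm : ‖(γ / ‖u‖) • u‖ = γ := by
    rw [hstep, norm_smul, norm_smul, norm_inv, norm_norm,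
      inv_mul_cancel₀ (norm_ne_zero_iff.mpr hu), mul_one, Real.norm_of_nonneg hγ.le]
  have hascent := add_inner_gradient_sub_le_of_lipschitz_gradient hdiff hlip θ ((γ / ‖u‖) • u)
  rw [hnorm, hstep, real_inner_smul_right] at hascent
  rw [hstep]
  have hinner :=
    mul_le_mul_of_nonneg_left (norm_div_three_sub_le_inner_inv_norm_smul w u) hγ.le
  have hsplit := mul_le_mul_of_nonneg_left (norm_sub_le_norm_sub_add_norm_sub u g w) hγ.le
  have hdom := mul_le_mul_of_nonneg_left (hgd θ) hγ.le
  linarith [mul_nonneg hγ.le (norm_nonneg (u - g))]
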